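/- Let scalar functions ψ₁,ψ₂,ψ₃ and φ₁,φ₂,φ₃ satisfy the Lax system (4.8) at spectral values λ(P) and λ(Q) respectively (φⱼ at parameter λ(σQ) with λ(σQ) = -λ(Q) substituted appropriately). Define Ω = ψ₁φ₂λ(P) - ψ₂φ₁λ(P) - ψ₃φ₃λ(P)². Then ∂_zΩ = i(λ(Q) - λ(P))λ(P)ψ₂φ₃ and ∂_{z̄}Ω = i eᵘ(λ(P)λ(Q)⁻¹ - 1)λ(P)ψ₃φ₁. In particular, if λ(P) = λ(Q) then Ω is constant in z and z̄. -/

import Mathlib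

open Complex

/-- Wirtinger derivative `∂_z = (∂_x - i∂_y)/2`. -/
noncomputable def dz (f : ℂ → ℂ) (z : ℂ) : ℂ :=
  (fderiv ℝ f z 1 - Complex.I * fderiv ℝ f z Complex.I) / 2

/-- Wirtinger derivative `∂_z̄ = (∂_x + i∂_y)/2`. -/
noncomputable def dzb (f : ℂ → ℂ) (z : ℂ) : ℂ :=
  (fderiv ℝ f z 1 + Complex.I * fderiv ℝ f z Complex.I) / 2


lemma dz_mul' {f g : ℂ → ℂ} {z : ℂ} (hf : DifferentiableAt ℝ f z)
    (hg : DifferentiableAt ℝ g z) :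
    dz (fun w => f w * g w) z = dz f z * g z + f z * dz g z := by
  simp only [dz, fderiv_fun_mul hf hg]
  simp [smul_eq_mul]
  ring

lemma dzb_mul' {f g : ℂ → ℂ} {z : ℂ} (hf : DifferentiableAt ℝ f z)
    (hg : DifferentiableAt ℝ g z) :
    dzb (fun w => f w * g w) z = dzb f z * g z + f z * dzb g z := by
  simp only [dzb, fderiv_fun_mul hf hg]
  simp [smul_eq_mul]
  ring

lemma dz_sub' {f g : ℂ → ℂ} {z : ℂ} (hf : DifferentiableAt ℝ f z)
    (hg : DifferentiableAt ℝ g z) :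
    dz (fun w => f w - g w) z = dz f z - dz g z := by
  simp only [dz, fderiv_fun_sub hf hg]
  simp
  ring

lemma dzb_sub' {f g : ℂ → ℂ} {z : ℂ} (hf : DifferentiableAt ℝ f z)
    (hg : DifferentiableAt ℝ g z) :
    dzb (fun w => f w - g w) z = dzb f z - dzb g z := by
  simp only [dzb, fderiv_fun_sub hf hg]
  simp
  ring

lemma dz_mul_const {f : ℂ → ℂ} {c z : ℂ} (hf : DifferentiableAt ℝ f z) :
    dz (fun w => f w * c) z = dz f z * c := by
  simp only [dz, fderiv_mul_const hf]
  simp [smul_eq_mul]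
  ring

lemma dzb_mul_const {f : ℂ → ℂ} {c z : ℂ} (hf : DifferentiableAt ℝ f z) :
    dzb (fun w => f w * c) z = dzb f z * c := by
  simp only [dzb, fderiv_mul_const hf]
  simp [smul_eq_mul]
  ring

/-- Let `ψ₁,ψ₂,ψ₃` solve the Lax system (4.8) at spectral value `λP` and
`φ₁,φ₂,φ₃` solve it at spectral value `-λQ`, over a solution `u` of the
Tzitzeica equation.  For the pairing
`Ω = ψ₁φ₂λP - ψ₂φ₁λP - ψ₃φ₃λP²` one has
`∂_zΩ = i(λQ - λP)λP ψ₂φ₃` and `∂_z̄Ω = i eᵘ(λPλQ⁻¹ - 1)λP ψ₃φ₁`;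
in particular, if `λP = λQ` then `Ω` is constant in `z` and `z̄`. -/
theorem stmt_15 (U : Set ℂ) (hU : IsOpen U) (u : ℂ → ℝ)
    (hu : ContDiffOn ℝ (⊤ : ℕ∞) u U)
    (uc : ℂ → ℂ) (huc : uc = fun w => ((u w : ℝ) : ℂ))
    (htz : ∀ z ∈ U, dz (dzb uc) z
      = ((Real.exp (u z) : ℝ) : ℂ) - ((Real.exp (-(2 * u z)) : ℝ) : ℂ))
    (lP lQ : ℂ) (hlP : lP ≠ 0) (hlQ : lQ ≠ 0)
    (ψ₁ ψ₂ ψ₃ φ₁ φ₂ φ₃ : ℂ → ℂ)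
    (hsm : ContDiffOn ℝ (⊤ : ℕ∞) ψ₁ U ∧ ContDiffOn ℝ (⊤ : ℕ∞) ψ₂ U ∧ ContDiffOn ℝ (⊤ : ℕ∞) ψ₃ U ∧
           ContDiffOn ℝ (⊤ : ℕ∞) φ₁ U ∧ ContDiffOn ℝ (⊤ : ℕ∞) φ₂ U ∧ ContDiffOn ℝ (⊤ : ℕ∞) φ₃ U)
    (hψ1z : ∀ z ∈ U, dz ψ₁ z = -(dz uc z) * ψ₁ z + Complex.I * lP * ψ₃ z)
    (hψ1zb : ∀ z ∈ U, dzb ψ₁ z = Complex.I * ((Real.exp (-(2 * u z)) : ℝ) : ℂ) * ψ₂ z)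
    (hψ2z : ∀ z ∈ U, dz ψ₂ z = dz uc z * ψ₂ z + Complex.I * ψ₁ z)
    (hψ2zb : ∀ z ∈ U, dzb ψ₂ z = Complex.I * ((Real.exp (u z) : ℝ) : ℂ) * ψ₃ z)
    (hψ3z : ∀ z ∈ U, dz ψ₃ z = Complex.I * ψ₂ z)
    (hψ3zb : ∀ z ∈ U, dzb ψ₃ z = Complex.I * lP⁻¹ * ((Real.exp (u z) : ℝ) : ℂ) * ψ₁ z)
    (hφ1z : ∀ z ∈ U, dz φ₁ z = -(dz uc z) * φ₁ z + Complex.I * (-lQ) * φ₃ z)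
    (hφ1zb : ∀ z ∈ U, dzb φ₁ z = Complex.I * ((Real.exp (-(2 * u z)) : ℝ) : ℂ) * φ₂ z)
    (hφ2z : ∀ z ∈ U, dz φ₂ z = dz uc z * φ₂ z + Complex.I * φ₁ z)
    (hφ2zb : ∀ z ∈ U, dzb φ₂ z = Complex.I * ((Real.exp (u z) : ℝ) : ℂ) * φ₃ z)
    (hφ3z : ∀ z ∈ U, dz φ₃ z = Complex.I * φ₂ z)
    (hφ3zb : ∀ z ∈ U, dzb φ₃ z = Complex.I * (-lQ)⁻¹ * ((Real.exp (u z) : ℝ) : ℂ) * φ₁ z)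
    (Ω : ℂ → ℂ)
    (hΩ : Ω = fun z => ψ₁ z * φ₂ z * lP - ψ₂ z * φ₁ z * lP - ψ₃ z * φ₃ z * lP ^ 2) :
    (∀ z ∈ U, dz Ω z = Complex.I * (lQ - lP) * lP * ψ₂ z * φ₃ z) ∧
    (∀ z ∈ U, dzb Ω z
      = Complex.I * ((Real.exp (u z) : ℝ) : ℂ) * (lP * lQ⁻¹ - 1) * lP * ψ₃ z * φ₁ z) ∧
    (lP = lQ → ∀ z ∈ U, dz Ω z = 0 ∧ dzb Ω z = 0) := by
  obtain ⟨h1,h2,h3,h4,h5,h6⟩ := hsm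
  have d : ∀ f : ℂ → ℂ, ContDiffOn ℝ (⊤ : ℕ∞) f U → ∀ z ∈ U, DifferentiableAt ℝ f z := by
    intro f hf z hz
    exact (hf.contDiffAt (hU.mem_nhds hz)).differentiableAt (by simp)
  have d1 := d _ h1; have d2 := d _ h2; have d3 := d _ h3
  have d4 := d _ h4; have d5 := d _ h5; have d6 := d _ h6
  have key : ∀ z ∈ U,
      dz Ω z = Complex.I * (lQ - lP) * lP * ψ₂ z * φ₃ z ∧
      dzb Ω z = Complex.I * ((Real.exp (u z) : ℝ) : ℂ) * (lP * lQ⁻¹ - 1) * lP * ψ₃ z * φ₁ z := by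
    intro z hz
    have m12 : DifferentiableAt ℝ (fun w => ψ₁ w * φ₂ w) z := (d1 z hz).mul (d5 z hz)
    have m21 : DifferentiableAt ℝ (fun w => ψ₂ w * φ₁ w) z := (d2 z hz).mul (d4 z hz)
    have m33 : DifferentiableAt ℝ (fun w => ψ₃ w * φ₃ w) z := (d3 z hz).mul (d6 z hz)
    have hΩ' : Ω = fun w => ((fun w => (fun w => ψ₁ w * φ₂ w) w * lP) w
        - (fun w => (fun w => ψ₂ w * φ₁ w) w * lP) w)
        - (fun w => (fun w => ψ₃ w * φ₃ w) w * lP ^ 2) w := by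
      rw [hΩ]
    constructor
    · rw [hΩ', dz_sub' ((m12.mul_const lP).fun_sub (m21.mul_const lP)) (m33.mul_const _),
        dz_sub' (m12.mul_const lP) (m21.mul_const lP),
        dz_mul_const m12, dz_mul_const m21, dz_mul_const m33,
        dz_mul' (d1 z hz) (d5 z hz), dz_mul' (d2 z hz) (d4 z hz), dz_mul' (d3 z hz) (d6 z hz),
        hψ1z z hz, hψ2z z hz, hψ3z z hz, hφ1z z hz, hφ2z z hz, hφ3z z hz]
      ring
    · rw [hΩ', dzb_sub' ((m12.mul_const lP).fun_sub (m21.mul_const lP)) (m33.mul_const _),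
        dzb_sub' (m12.mul_const lP) (m21.mul_const lP),
        dzb_mul_const m12, dzb_mul_const m21, dzb_mul_const m33,
        dzb_mul' (d1 z hz) (d5 z hz), dzb_mul' (d2 z hz) (d4 z hz), dzb_mul' (d3 z hz) (d6 z hz),
        hψ1zb z hz, hψ2zb z hz, hψ3zb z hz, hφ1zb z hz, hφ2zb z hz, hφ3zb z hz]
      field_simp [hlP, hlQ]
      ring
  refine ⟨fun z hz => (key z hz).1, fun z hz => (key z hz).2, ?_⟩
  rintro rfl z hz
  refine ⟨?_, ?_⟩
  · rw [(key z hz).1]; ring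
  · rw [(key z hz).2, mul_inv_cancel₀ hlP]; ring
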